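/- Let p be a strongly irreducible ℤ^d-invariant transition kernel on ℤ^d × {1,…,N}, let 𝓕 ⊆ ℝ^d be the interior of the set of u for which all entries of F(u) are finite (a convex open set), and suppose λ : 𝓕 → ℝ and C : 𝓕 → ℝ^N are functions such that for every u ∈ 𝓕 the vector C(u) has all entries positive and F(u)C(u) = λ(u)C(u). Then λ is strictly convex on 𝓕. -/

import Mathlib

open scoped ENNReal
open Filter Topology

noncomputable section

/-- Convolution powers of a `ℤ^d`-invariant kernel on `ℤ^d × {1,…,N}`, where
`q z k j = p_{k,j}(0,z)`; `p^{(n)}_{k,j}(x,y)` is `convPow q n (y-x) k j`. -/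
def convPow {d N : ℕ} (q : (Fin d → ℤ) → Fin N → Fin N → ℝ≥0∞) :
    ℕ → (Fin d → ℤ) → Fin N → Fin N → ℝ≥0∞
  | 0 => fun z k j => if z = 0 ∧ k = j then 1 else 0
  | n + 1 => fun z k j => ∑' w : Fin d → ℤ, ∑ l : Fin N, q w k l * convPow q n (z - w) l j

/-- Strong irreducibility: for all `x, y, k, j` there is `n₀` with `p^{(n)}_{k,j}(x,y) > 0` for
all `n ≥ n₀`. -/
def StronglyIrreducibleKer {d N : ℕ} (q : (Fin d → ℤ) → Fin N → Fin N → ℝ≥0∞) : Prop :=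
  ∀ (z : Fin d → ℤ) (k j : Fin N), ∃ n₀ : ℕ, ∀ n ≥ n₀, 0 < convPow q n z k j

/-- (Weak) irreducibility: for all `x, y, k, j` there is `n` with `p^{(n)}_{k,j}(x,y) > 0`. -/
def IrreducibleKer {d N : ℕ} (q : (Fin d → ℤ) → Fin N → Fin N → ℝ≥0∞) : Prop :=
  ∀ (z : Fin d → ℤ) (k j : Fin N), ∃ n : ℕ, 0 < convPow q n z k j

/-- Finitely supported kernel: `{(y,j) : p_{k,j}(0,y) > 0}` is finite for each `k`. -/
def FinSuppKer {d N : ℕ} (q : (Fin d → ℤ) → Fin N → Fin N → ℝ≥0∞) : Prop :=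
  ∀ k : Fin N, {zj : (Fin d → ℤ) × Fin N | q zj.1 k zj.2 ≠ 0}.Finite

/-- `u · z` for `u ∈ ℝ^d`, `z ∈ ℤ^d`. -/
def dotZ {d : ℕ} (u : Fin d → ℝ) (z : Fin d → ℤ) : ℝ := ∑ i, u i * (z i : ℝ)

/-- The matrix `F(u)` with entries `F_{k,j}(u) = ∑_{x∈ℤ^d} p_{k,j}(0,x) e^{u·x} ∈ [0,∞]`. -/
def Fmat {d N : ℕ} (q : (Fin d → ℤ) → Fin N → Fin N → ℝ≥0∞) (u : Fin d → ℝ) :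
    Matrix (Fin N) (Fin N) ℝ≥0∞ :=
  Matrix.of fun k j => ∑' z : Fin d → ℤ, q z k j * ENNReal.ofReal (Real.exp (dotZ u z))

/-- The real matrix `F(u)` (meaningful when all entries are finite). -/
def FmatR {d N : ℕ} (q : (Fin d → ℤ) → Fin N → Fin N → ℝ≥0∞) (u : Fin d → ℝ) :
    Matrix (Fin N) (Fin N) ℝ :=
  Matrix.of fun k j => (Fmat q u k j).toReal

/-- The continuous linear map `v ↦ ∑ i, m i * v i`, i.e. the linear form with gradient `m`. -/
def dotCLM {d : ℕ} (m : Fin d → ℝ) : (Fin d → ℝ) →L[ℝ] ℝ :=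
  ∑ i, m i • (ContinuousLinearMap.proj i : (Fin d → ℝ) →L[ℝ] ℝ)

/-- The drift vector `p⃗ = ∑_{x} ∑_{k,j} ν₀(k)·x·p_{k,j}(0,x)`. -/
def driftVec {d N : ℕ} (q : (Fin d → ℤ) → Fin N → Fin N → ℝ≥0∞) (ν₀ : Fin N → ℝ) :
    Fin d → ℝ :=
  fun i => ∑' z : Fin d → ℤ, ∑ k, ∑ j, ν₀ k * (z i : ℝ) * (q z k j).toReal

/-- Euclidean norm on `ℤ^d`. -/
def eNormZ {d : ℕ} (z : Fin d → ℤ) : ℝ := Real.sqrt (∑ i, ((z i : ℝ)) ^ 2)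

/-- Euclidean norm on `ℝ^d`. -/
def eNormR {d : ℕ} (v : Fin d → ℝ) : ℝ := Real.sqrt (∑ i, (v i) ^ 2)

/-- The value of the quadratic form associated to a symmetric matrix. -/
def quadVal {d : ℕ} (M : Matrix (Fin d) (Fin d) ℝ) (v : Fin d → ℝ) : ℝ :=
  dotProduct v (M.mulVec v)

namespace Stmt3Aux

def E {d : ℕ} (u : Fin d → ℝ) (z : Fin d → ℤ) : ℝ≥0∞ := ENNReal.ofReal (Real.exp (dotZ u z))

lemma E_pos {d : ℕ} (u : Fin d → ℝ) (z : Fin d → ℤ) : 0 < E u z :=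
  ENNReal.ofReal_pos.2 (Real.exp_pos _)

lemma E_ne_top {d : ℕ} (u : Fin d → ℝ) (z : Fin d → ℤ) : E u z ≠ ⊤ := ENNReal.ofReal_ne_top

lemma dotZ_add {d : ℕ} (u : Fin d → ℝ) (w y : Fin d → ℤ) :
    dotZ u (w + y) = dotZ u w + dotZ u y := by
  simp [dotZ, mul_add, Finset.sum_add_distrib]

lemma E_add {d : ℕ} (u : Fin d → ℝ) (w y : Fin d → ℤ) : E u (w + y) = E u w * E u y := by
  rw [E, dotZ_add, Real.exp_add, ENNReal.ofReal_mul (Real.exp_nonneg _)]; rfl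

lemma E_zero {d : ℕ} (u : Fin d → ℝ) : E u (0 : Fin d → ℤ) = 1 := by
  simp [E, dotZ]

def Gmat {d N : ℕ} (q : (Fin d → ℤ) → Fin N → Fin N → ℝ≥0∞) (u : Fin d → ℝ) (n : ℕ) :
    Matrix (Fin N) (Fin N) ℝ≥0∞ :=
  Matrix.of fun k j => ∑' z : Fin d → ℤ, convPow q n z k j * E u z

lemma Gmat_succ {d N : ℕ} (q : (Fin d → ℤ) → Fin N → Fin N → ℝ≥0∞) (u : Fin d → ℝ) (n : ℕ) :
    Gmat q u (n + 1) = Fmat q u * Gmat q u n := by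
  funext k j
  show ∑' z : Fin d → ℤ, convPow q (n+1) z k j * E u z = _
  rw [Matrix.mul_apply]
  have step1 : ∀ z : Fin d → ℤ, convPow q (n+1) z k j * E u z
      = ∑' w : Fin d → ℤ, ∑ l : Fin N, q w k l * convPow q n (z - w) l j * E u z := by
    intro z
    rw [convPow, ← ENNReal.tsum_mul_right]
    congr 1; funext w
    rw [Finset.sum_mul]
  calc ∑' z : Fin d → ℤ, convPow q (n+1) z k j * E u z
      = ∑' z : Fin d → ℤ, ∑' w : Fin d → ℤ, ∑ l : Fin N,
          q w k l * convPow q n (z - w) l j * E u z := by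
        exact tsum_congr step1
    _ = ∑' w : Fin d → ℤ, ∑' z : Fin d → ℤ, ∑ l : Fin N,
          q w k l * convPow q n (z - w) l j * E u z := ENNReal.tsum_comm
    _ = ∑' w : Fin d → ℤ, ∑' y : Fin d → ℤ, ∑ l : Fin N,
          q w k l * E u w * (convPow q n y l j * E u y) := by
        refine tsum_congr fun w => ?_
        rw [← (Equiv.addLeft w).tsum_eq]
        refine tsum_congr fun y => Finset.sum_congr rfl fun l _ => ?_
        have hz : (w + y) - w = y := by abel
        have : E u (w + y) = E u w * E u y := E_add u w y
        simp only [Equiv.coe_addLeft, hz, this]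
        ring
    _ = ∑' w : Fin d → ℤ, ∑ l : Fin N,
          q w k l * E u w * (∑' y : Fin d → ℤ, convPow q n y l j * E u y) := by
        refine tsum_congr fun w => ?_
        rw [Summable.tsum_finsetSum (fun l _ => ENNReal.summable)]
        exact Finset.sum_congr rfl fun l _ => ENNReal.tsum_mul_left
    _ = ∑ l : Fin N, (∑' w : Fin d → ℤ, q w k l * E u w)
          * (∑' y : Fin d → ℤ, convPow q n y l j * E u y) := by
        rw [Summable.tsum_finsetSum (fun l _ => ENNReal.summable)]
        exact Finset.sum_congr rfl fun l _ => ENNReal.tsum_mul_right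
    _ = ∑ l : Fin N, Fmat q u k l * Gmat q u n l j := rfl

lemma Gmat_zero {d N : ℕ} (q : (Fin d → ℤ) → Fin N → Fin N → ℝ≥0∞) (u : Fin d → ℝ) :
    Gmat q u 0 = 1 := by
  funext k j
  show ∑' z : Fin d → ℤ, convPow q 0 z k j * E u z = (1 : Matrix (Fin N) (Fin N) ℝ≥0∞) k j
  rw [tsum_eq_single (0 : Fin d → ℤ)]
  · by_cases h : k = j <;> simp [convPow, h, E_zero, Matrix.one_apply]
  · intro z hz
    simp [convPow, hz]

lemma Gmat_eq {d N : ℕ} (q : (Fin d → ℤ) → Fin N → Fin N → ℝ≥0∞) (u : Fin d → ℝ) (n : ℕ) :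
    Gmat q u n = (Fmat q u) ^ n := by
  induction n with
  | zero => simpa using Gmat_zero q u
  | succ n ih => rw [Gmat_succ, ih, pow_succ']

lemma Fpow_ne_top {d N : ℕ} {q : (Fin d → ℤ) → Fin N → Fin N → ℝ≥0∞} {u : Fin d → ℝ}
    (hu : ∀ k j, Fmat q u k j ≠ ⊤) (n : ℕ) : ∀ k j, ((Fmat q u) ^ n) k j ≠ ⊤ := by
  induction n with
  | zero => intro k j; by_cases h : k = j <;> simp [Matrix.one_apply, h]
  | succ n ih =>
      intro k j
      rw [pow_succ, Matrix.mul_apply]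
      exact (ENNReal.sum_lt_top.2 fun l _ =>
        ENNReal.mul_lt_top (ih k l).lt_top (hu l j).lt_top).ne

lemma Fpow_pos {d N : ℕ} {q : (Fin d → ℤ) → Fin N → Fin N → ℝ≥0∞} (u : Fin d → ℝ)
    {n : ℕ} {z : Fin d → ℤ} {k j : Fin N} (h : 0 < convPow q n z k j) :
    0 < ((Fmat q u) ^ n) k j := by
  rw [← Gmat_eq]
  calc (0 : ℝ≥0∞) < convPow q n z k j * E u z := ENNReal.mul_pos h.ne' (E_pos u z).ne'
    _ ≤ _ := ENNReal.le_tsum z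

lemma convPow_ne_top {d N : ℕ} {q : (Fin d → ℤ) → Fin N → Fin N → ℝ≥0∞} {u : Fin d → ℝ}
    (hu : ∀ k j, Fmat q u k j ≠ ⊤) (n : ℕ) (z : Fin d → ℤ) (k j : Fin N) :
    convPow q n z k j ≠ ⊤ := by
  intro htop
  have h1 : convPow q n z k j * E u z ≤ Gmat q u n k j := ENNReal.le_tsum z
  have h2 : Gmat q u n k j ≠ ⊤ := by rw [Gmat_eq]; exact Fpow_ne_top hu n k j
  rw [htop, ENNReal.top_mul (E_pos u z).ne'] at h1
  exact h2 (top_le_iff.1 h1)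

lemma strict_young {x y t : ℝ} (hx : 0 ≤ x) (hy : 0 ≤ y) (ht : 0 < t) (ht1 : t < 1)
    (hxy : x ≠ y) : x ^ t * y ^ (1 - t) < t * x + (1 - t) * y := by
  have h1t : 0 < 1 - t := by linarith
  rcases hx.eq_or_lt with hx0 | hx0
  · rcases hy.eq_or_lt with hy0 | hy0
    · exact absurd (hx0.symm.trans hy0) hxy
    · rw [← hx0, Real.zero_rpow ht.ne']
      nlinarith
  · rcases hy.eq_or_lt with hy0 | hy0
    · rw [← hy0, Real.zero_rpow h1t.ne']
      nlinarith
    · have key := strictConvexOn_exp.2 (Set.mem_univ (Real.log x)) (Set.mem_univ (Real.log y))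
        (fun h => hxy (by rw [← Real.exp_log hx0, ← Real.exp_log hy0, h])) ht h1t (by ring)
      rw [Real.exp_log hx0, Real.exp_log hy0] at key
      calc x ^ t * y ^ (1 - t) = Real.exp (t • Real.log x + (1 - t) • Real.log y) := by
            rw [Real.exp_add, Real.rpow_def_of_pos hx0, Real.rpow_def_of_pos hy0]
            simp [smul_eq_mul, mul_comm]
        _ < t * x + (1 - t) * y := by simpa [smul_eq_mul] using key

lemma young_ennreal {a b : ℝ≥0∞} (ha : a ≠ ⊤) (hb : b ≠ ⊤) {t : ℝ} (ht : 0 < t) (ht1 : t < 1) :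
    a ^ t * b ^ (1 - t) ≤ ENNReal.ofReal t * a + ENNReal.ofReal (1 - t) * b := by
  have h1t : 0 < 1 - t := by linarith
  rw [← ENNReal.ofReal_toReal ha, ← ENNReal.ofReal_toReal hb,
    ENNReal.ofReal_rpow_of_nonneg ENNReal.toReal_nonneg ht.le,
    ENNReal.ofReal_rpow_of_nonneg ENNReal.toReal_nonneg h1t.le,
    ← ENNReal.ofReal_mul (Real.rpow_nonneg ENNReal.toReal_nonneg _),
    ← ENNReal.ofReal_mul ht.le, ← ENNReal.ofReal_mul h1t.le,
    ← ENNReal.ofReal_add (by positivity) (by positivity)]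
  exact ENNReal.ofReal_le_ofReal
    (Real.geom_mean_le_arith_mean2_weighted ht.le h1t.le ENNReal.toReal_nonneg
      ENNReal.toReal_nonneg (by ring))

lemma young_ennreal_lt {a b : ℝ≥0∞} (ha : a ≠ ⊤) (hb : b ≠ ⊤) {t : ℝ} (ht : 0 < t)
    (ht1 : t < 1) (hab : a ≠ b) :
    a ^ t * b ^ (1 - t) < ENNReal.ofReal t * a + ENNReal.ofReal (1 - t) * b := by
  have h1t : 0 < 1 - t := by linarith
  have hab' : a.toReal ≠ b.toReal := fun h => hab ((ENNReal.toReal_eq_toReal_iff' ha hb).1 h)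
  have key := strict_young ENNReal.toReal_nonneg ENNReal.toReal_nonneg ht ht1 hab'
  have hpos : 0 < t * a.toReal + (1 - t) * b.toReal :=
    lt_of_le_of_lt (by positivity) key
  rw [← ENNReal.ofReal_toReal ha, ← ENNReal.ofReal_toReal hb,
    ENNReal.ofReal_rpow_of_nonneg ENNReal.toReal_nonneg ht.le,
    ENNReal.ofReal_rpow_of_nonneg ENNReal.toReal_nonneg h1t.le,
    ← ENNReal.ofReal_mul (Real.rpow_nonneg ENNReal.toReal_nonneg _),
    ← ENNReal.ofReal_mul ht.le, ← ENNReal.ofReal_mul h1t.le,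
    ← ENNReal.ofReal_add (by positivity) (by positivity)]
  exact (ENNReal.ofReal_lt_ofReal_iff hpos).2 key

section Holder
variable {ι : Type*} {f g : ι → ℝ≥0∞} {t : ℝ}

lemma term_scaled (ht : 0 < t) (ht1 : t < 1) {S T : ℝ≥0∞} (hS0 : S ≠ 0) (hS : S ≠ ⊤)
    (hT0 : T ≠ 0) (hT : T ≠ ⊤) (a b : ℝ≥0∞) :
    a ^ t * b ^ (1 - t) = (S ^ t * T ^ (1 - t)) * ((a / S) ^ t * (b / T) ^ (1 - t)) := by
  have h1t : 0 < 1 - t := by linarith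
  rw [ENNReal.div_rpow_of_nonneg _ _ ht.le, ENNReal.div_rpow_of_nonneg _ _ h1t.le,
    mul_mul_mul_comm, ENNReal.mul_div_cancel (by simp [ENNReal.rpow_eq_zero_iff, hS0, hS])
      (ENNReal.rpow_ne_top_of_nonneg ht.le hS),
    ENNReal.mul_div_cancel (by simp [ENNReal.rpow_eq_zero_iff, hT0, hT])
      (ENNReal.rpow_ne_top_of_nonneg h1t.le hT)]

lemma sum_young_rhs (ht : 0 < t) (ht1 : t < 1) {S T : ℝ≥0∞} (hS0 : S ≠ 0) (hS : S ≠ ⊤)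
    (hT0 : T ≠ 0) (hT : T ≠ ⊤) (hfS : ∑' i, f i = S) (hgT : ∑' i, g i = T) :
    ∑' i, (S ^ t * T ^ (1 - t)) *
      (ENNReal.ofReal t * (f i / S) + ENNReal.ofReal (1 - t) * (g i / T))
      = S ^ t * T ^ (1 - t) := by
  have h1t : 0 < 1 - t := by linarith
  rw [ENNReal.tsum_mul_left]
  have : ∑' i, (ENNReal.ofReal t * (f i / S) + ENNReal.ofReal (1 - t) * (g i / T)) = 1 := by
    rw [ENNReal.tsum_add, ENNReal.tsum_mul_left, ENNReal.tsum_mul_left]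
    simp only [div_eq_mul_inv, ENNReal.tsum_mul_right, hfS, hgT,
      ENNReal.mul_inv_cancel hS0 hS, ENNReal.mul_inv_cancel hT0 hT, mul_one]
    rw [← ENNReal.ofReal_add ht.le h1t.le]
    norm_num
  rw [this, mul_one]

lemma holder_tsum (ht : 0 < t) (ht1 : t < 1) (f g : ι → ℝ≥0∞) :
    ∑' i, (f i) ^ t * (g i) ^ (1 - t) ≤ (∑' i, f i) ^ t * (∑' i, g i) ^ (1 - t) := by
  have h1t : 0 < 1 - t := by linarith
  set S := ∑' i, f i with hSdef
  set T := ∑' i, g i with hTdef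
  by_cases hS0 : S = 0
  · have hf : ∀ i, f i = 0 := ENNReal.tsum_eq_zero.1 hS0
    simp [hf, ENNReal.zero_rpow_of_pos ht]
  by_cases hT0 : T = 0
  · have hg : ∀ i, g i = 0 := ENNReal.tsum_eq_zero.1 hT0
    simp [hg, ENNReal.zero_rpow_of_pos h1t]
  by_cases hS : S = ⊤
  · rw [hS, ENNReal.top_rpow_of_pos ht, ENNReal.top_mul]
    · exact le_top
    · intro h
      rcases ENNReal.rpow_eq_zero_iff.1 h with ⟨h, -⟩ | ⟨-, h⟩
      · exact hT0 h
      · linarith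
  by_cases hT : T = ⊤
  · rw [hT, ENNReal.top_rpow_of_pos h1t, ENNReal.mul_top]
    · exact le_top
    · intro h
      rcases ENNReal.rpow_eq_zero_iff.1 h with ⟨h, -⟩ | ⟨-, h⟩
      · exact hS0 h
      · linarith
  calc ∑' i, (f i) ^ t * (g i) ^ (1 - t)
      ≤ ∑' i, (S ^ t * T ^ (1 - t)) *
          (ENNReal.ofReal t * (f i / S) + ENNReal.ofReal (1 - t) * (g i / T)) := by
        refine Summable.tsum_le_tsum (fun i => ?_) ENNReal.summable ENNReal.summable
        rw [term_scaled ht ht1 hS0 hS hT0 hT]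
        refine mul_le_mul_right (young_ennreal ?_ ?_ ht ht1) _
        · exact (ENNReal.div_lt_top (fun h => hS ((top_le_iff.1 (h ▸ ENNReal.le_tsum i)))) hS0).ne
        · exact (ENNReal.div_lt_top (fun h => hT ((top_le_iff.1 (h ▸ ENNReal.le_tsum i)))) hT0).ne
    _ = S ^ t * T ^ (1 - t) := sum_young_rhs ht ht1 hS0 hS hT0 hT rfl rfl

lemma holder_tsum_lt (ht : 0 < t) (ht1 : t < 1) (f g : ι → ℝ≥0∞)
    (hS0 : ∑' i, f i ≠ 0) (hS : ∑' i, f i ≠ ⊤) (hT0 : ∑' i, g i ≠ 0) (hT : ∑' i, g i ≠ ⊤)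
    (i₀ : ι) (hne : f i₀ * (∑' i, g i) ≠ g i₀ * (∑' i, f i)) :
    ∑' i, (f i) ^ t * (g i) ^ (1 - t) < (∑' i, f i) ^ t * (∑' i, g i) ^ (1 - t) := by
  have h1t : 0 < 1 - t := by linarith
  set S := ∑' i, f i with hSdef
  set T := ∑' i, g i with hTdef
  have hfi : ∀ i, f i ≠ ⊤ := fun i h => hS (top_le_iff.1 (h ▸ ENNReal.le_tsum i))
  have hgi : ∀ i, g i ≠ ⊤ := fun i h => hT (top_le_iff.1 (h ▸ ENNReal.le_tsum i))
  have hdiv : f i₀ / S ≠ g i₀ / T := by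
    intro h
    apply hne
    calc f i₀ * T = (f i₀ / S * S) * T := by rw [ENNReal.div_mul_cancel hS0 hS]
      _ = (g i₀ / T * T) * S := by rw [h]; ring
      _ = g i₀ * S := by rw [ENNReal.div_mul_cancel hT0 hT]
  have hconst0 : S ^ t * T ^ (1 - t) ≠ 0 := by
    intro h
    rcases mul_eq_zero.1 h with h | h <;>
      rcases ENNReal.rpow_eq_zero_iff.1 h with ⟨h1, h2⟩ | ⟨h1, h2⟩
    exacts [hS0 h1, absurd h2 (by linarith), hT0 h1, absurd h2 (by linarith)]
  have hconst : S ^ t * T ^ (1 - t) ≠ ⊤ := ENNReal.mul_ne_top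
    (ENNReal.rpow_ne_top_of_nonneg ht.le hS) (ENNReal.rpow_ne_top_of_nonneg h1t.le hT)
  have hfdiv : ∀ i, f i / S ≠ ⊤ := fun i =>
    (ENNReal.div_lt_top (hfi i) hS0).ne
  have hgdiv : ∀ i, g i / T ≠ ⊤ := fun i =>
    (ENNReal.div_lt_top (hgi i) hT0).ne
  calc ∑' i, (f i) ^ t * (g i) ^ (1 - t)
      < ∑' i, (S ^ t * T ^ (1 - t)) *
          (ENNReal.ofReal t * (f i / S) + ENNReal.ofReal (1 - t) * (g i / T)) := by
        refine ENNReal.tsum_lt_tsum (i := i₀) ?_ (fun i => ?_) ?_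
        · exact ((holder_tsum ht ht1 f g).trans_lt hconst.lt_top).ne
        · rw [term_scaled ht ht1 hS0 hS hT0 hT]
          exact mul_le_mul_right (young_ennreal (hfdiv i) (hgdiv i) ht ht1) _
        · rw [term_scaled ht ht1 hS0 hS hT0 hT (f i₀) (g i₀)]
          exact (ENNReal.mul_lt_mul_iff_right hconst0 hconst).2
            (young_ennreal_lt (hfdiv i₀) (hgdiv i₀) ht ht1 hdiv)
    _ = S ^ t * T ^ (1 - t) := sum_young_rhs ht ht1 hS0 hS hT0 hT rfl rfl

end Holder

section Comb
variable {d N : ℕ} {a b : ℝ}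

lemma dotZ_comb (ha : 0 ≤ a) (hb : 0 ≤ b) (u v : Fin d → ℝ) (z : Fin d → ℤ) :
    dotZ (a • u + b • v) z = a * dotZ u z + b * dotZ v z := by
  simp only [dotZ, Pi.add_apply, Pi.smul_apply, smul_eq_mul, Finset.mul_sum,
    ← Finset.sum_add_distrib]
  exact Finset.sum_congr rfl fun i _ => by ring

lemma E_comb (ha : 0 ≤ a) (hb : 0 ≤ b) (u v : Fin d → ℝ) (z : Fin d → ℤ) :
    E (a • u + b • v) z = (E u z) ^ a * (E v z) ^ b := by
  rw [E, dotZ_comb ha hb, E, E, ENNReal.ofReal_rpow_of_pos (Real.exp_pos _),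
    ENNReal.ofReal_rpow_of_pos (Real.exp_pos _),
    ← ENNReal.ofReal_mul (by positivity), ← Real.exp_mul, ← Real.exp_mul, ← Real.exp_add,
    mul_comm (dotZ u z) a, mul_comm (dotZ v z) b]

lemma term_comb (ha : 0 ≤ a) (hb : 0 ≤ b) (hab : a + b = 1) (c : ℝ≥0∞)
    (u v : Fin d → ℝ) (z : Fin d → ℤ) :
    c * E (a • u + b • v) z = (c * E u z) ^ a * (c * E v z) ^ b := by
  rw [ENNReal.mul_rpow_of_nonneg _ _ ha, ENNReal.mul_rpow_of_nonneg _ _ hb,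
    mul_mul_mul_comm, ← ENNReal.rpow_add_of_nonneg a b ha hb, hab, ENNReal.rpow_one,
    E_comb ha hb]

lemma Gmat_comb_le (q : (Fin d → ℤ) → Fin N → Fin N → ℝ≥0∞) (ha : 0 < a) (hb : 0 < b)
    (hab : a + b = 1) (u v : Fin d → ℝ) (n : ℕ) (k j : Fin N) :
    Gmat q (a • u + b • v) n k j ≤ (Gmat q u n k j) ^ a * (Gmat q v n k j) ^ b := by
  have hb' : b = 1 - a := by linarith
  have h := holder_tsum (ι := Fin d → ℤ) (t := a) ha (by linarith)
    (fun z => convPow q n z k j * E u z) (fun z => convPow q n z k j * E v z)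
  rw [← hb'] at h
  calc Gmat q (a • u + b • v) n k j
      = ∑' z : Fin d → ℤ, (convPow q n z k j * E u z) ^ a * (convPow q n z k j * E v z) ^ b :=
        tsum_congr fun z => term_comb ha.le hb.le hab _ u v z
    _ ≤ _ := h

lemma Gmat_comb_lt (q : (Fin d → ℤ) → Fin N → Fin N → ℝ≥0∞) (ha : 0 < a) (hb : 0 < b)
    (hab : a + b = 1) {u v : Fin d → ℝ}
    (hu : ∀ k j, Fmat q u k j ≠ ⊤) (hv : ∀ k j, Fmat q v k j ≠ ⊤)
    {zs : Fin d → ℤ} (hzs : dotZ u zs ≠ dotZ v zs) {n₀ : ℕ} {k j : Fin N}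
    (h0 : 0 < convPow q n₀ 0 k j) (hzs0 : 0 < convPow q n₀ zs k j) :
    Gmat q (a • u + b • v) n₀ k j < (Gmat q u n₀ k j) ^ a * (Gmat q v n₀ k j) ^ b := by
  have hb' : (1 : ℝ) - a = b := by linarith
  set f : (Fin d → ℤ) → ℝ≥0∞ := fun z => convPow q n₀ z k j * E u z with hf
  set g : (Fin d → ℤ) → ℝ≥0∞ := fun z => convPow q n₀ z k j * E v z with hg
  have hSu : ∑' z, f z = Gmat q u n₀ k j := rfl
  have hSv : ∑' z, g z = Gmat q v n₀ k j := rfl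
  have hS : ∑' z, f z ≠ ⊤ := by rw [hSu, Gmat_eq]; exact Fpow_ne_top hu n₀ k j
  have hT : ∑' z, g z ≠ ⊤ := by rw [hSv, Gmat_eq]; exact Fpow_ne_top hv n₀ k j
  have hS0 : ∑' z, f z ≠ 0 := by
    intro h
    have : f 0 = 0 := by
      have := ENNReal.tsum_eq_zero.1 h 0; exact this
    rw [hf] at this
    exact (ENNReal.mul_pos h0.ne' (E_pos u 0).ne').ne' this
  have hT0 : ∑' z, g z ≠ 0 := by
    intro h
    have : g 0 = 0 := ENNReal.tsum_eq_zero.1 h 0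
    rw [hg] at this
    exact (ENNReal.mul_pos h0.ne' (E_pos v 0).ne').ne' this
  have hcne : ∀ n z, convPow q n z k j ≠ ⊤ := fun n z => convPow_ne_top hu n z k j
  -- choose the witness point
  have key : ∃ i₀, f i₀ * (∑' z, g z) ≠ g i₀ * (∑' z, f z) := by
    by_cases h00 : f 0 * (∑' z, g z) = g 0 * (∑' z, f z)
    · refine ⟨zs, fun hzz => ?_⟩
      have hc0 : convPow q n₀ 0 k j ≠ 0 := h0.ne'
      have hST : (∑' z, g z) = (∑' z, f z) := by
        have hf0 : f 0 = convPow q n₀ 0 k j := by rw [hf]; simp [E_zero]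
        have hg0 : g 0 = convPow q n₀ 0 k j := by rw [hg]; simp [E_zero]
        rw [hf0, hg0] at h00
        exact (ENNReal.mul_right_inj hc0 (hcne n₀ 0)).1 h00
      rw [hST] at hzz
      have hfg : f zs = g zs := (ENNReal.mul_left_inj hS0 hS).1 hzz
      rw [hf, hg] at hfg
      have hE : E u zs = E v zs :=
        (ENNReal.mul_right_inj hzs0.ne' (hcne n₀ zs)).1 hfg
      rw [E, E, ENNReal.ofReal_eq_ofReal_iff (Real.exp_nonneg _) (Real.exp_nonneg _),
        Real.exp_eq_exp] at hE
      exact hzs hE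
    · exact ⟨0, h00⟩
  obtain ⟨i₀, hi₀⟩ := key
  have h := holder_tsum_lt (t := a) ha (by linarith) f g hS0 hS hT0 hT i₀ hi₀
  rw [hb'] at h
  calc Gmat q (a • u + b • v) n₀ k j
      = ∑' z : Fin d → ℤ, (f z) ^ a * (g z) ^ b :=
        tsum_congr fun z => term_comb ha.le hb.le hab _ u v z
    _ < _ := h

def Hmat (q : (Fin d → ℤ) → Fin N → Fin N → ℝ≥0∞) (u v : Fin d → ℝ) (a b : ℝ) (M : ℕ) :
    Matrix (Fin N) (Fin N) ℝ≥0∞ :=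
  Matrix.of fun k j => ((Fmat q u ^ M) k j) ^ a * ((Fmat q v ^ M) k j) ^ b

lemma Hmat_mul_le (q : (Fin d → ℤ) → Fin N → Fin N → ℝ≥0∞) (ha : 0 < a) (hb : 0 < b)
    (hab : a + b = 1) (u v : Fin d → ℝ) (M₁ M₂ : ℕ) (k j : Fin N) :
    ∑ l, Hmat q u v a b M₁ k l * Hmat q u v a b M₂ l j ≤ Hmat q u v a b (M₁ + M₂) k j := by
  have hb' : (1 : ℝ) - a = b := by linarith
  have h := holder_tsum (ι := Fin N) (t := a) ha (by linarith)
    (fun l => (Fmat q u ^ M₁) k l * (Fmat q u ^ M₂) l j)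
    (fun l => (Fmat q v ^ M₁) k l * (Fmat q v ^ M₂) l j)
  rw [hb', tsum_fintype, tsum_fintype, tsum_fintype] at h
  calc ∑ l, Hmat q u v a b M₁ k l * Hmat q u v a b M₂ l j
      = ∑ l, ((Fmat q u ^ M₁) k l * (Fmat q u ^ M₂) l j) ^ a
          * ((Fmat q v ^ M₁) k l * (Fmat q v ^ M₂) l j) ^ b := by
        refine Finset.sum_congr rfl fun l _ => ?_
        rw [ENNReal.mul_rpow_of_nonneg _ _ ha.le, ENNReal.mul_rpow_of_nonneg _ _ hb.le]
        show ((Fmat q u ^ M₁) k l)^a * ((Fmat q v ^ M₁) k l)^b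
          * (((Fmat q u ^ M₂) l j)^a * ((Fmat q v ^ M₂) l j)^b) = _
        ring
    _ ≤ ((∑ l, (Fmat q u ^ M₁) k l * (Fmat q u ^ M₂) l j)) ^ a
          * ((∑ l, (Fmat q v ^ M₁) k l * (Fmat q v ^ M₂) l j)) ^ b := h
    _ = Hmat q u v a b (M₁ + M₂) k j := by
        rw [Hmat, pow_add, pow_add]
        simp [Matrix.mul_apply]

lemma pow_comb_bound (q : (Fin d → ℤ) → Fin N → Fin N → ℝ≥0∞) (ha : 0 < a) (hb : 0 < b)
    (hab : a + b = 1) (u v : Fin d → ℝ) (n₀ : ℕ) (θ : ℝ≥0∞)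
    (hθ : ∀ k j, (Fmat q (a • u + b • v) ^ n₀) k j ≤ θ * Hmat q u v a b n₀ k j) :
    ∀ m k j, (Fmat q (a • u + b • v) ^ ((m + 1) * n₀)) k j
      ≤ θ ^ (m + 1) * Hmat q u v a b ((m + 1) * n₀) k j := by
  intro m
  induction m with
  | zero => intro k j; simpa using hθ k j
  | succ m ih =>
      intro k j
      have hsplit : (m + 2) * n₀ = (m + 1) * n₀ + n₀ := by ring
      rw [hsplit, pow_add, Matrix.mul_apply]
      calc ∑ l, (Fmat q (a • u + b • v) ^ ((m + 1) * n₀)) k l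
            * (Fmat q (a • u + b • v) ^ n₀) l j
          ≤ ∑ l, (θ ^ (m + 1) * Hmat q u v a b ((m + 1) * n₀) k l)
            * (θ * Hmat q u v a b n₀ l j) :=
            Finset.sum_le_sum fun l _ => mul_le_mul' (ih k l) (hθ l j)
        _ = θ ^ (m + 2) * ∑ l, Hmat q u v a b ((m + 1) * n₀) k l * Hmat q u v a b n₀ l j := by
            rw [Finset.mul_sum]
            refine Finset.sum_congr rfl fun l _ => ?_
            rw [mul_mul_mul_comm, ← pow_succ]
        _ ≤ θ ^ (m + 2) * Hmat q u v a b ((m + 1) * n₀ + n₀) k j :=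
            mul_le_mul_right (Hmat_mul_le q ha hb hab u v _ _ k j) _
        _ = θ ^ (m + 1 + 1) * Hmat q u v a b ((m + 1) * n₀ + n₀) k j := rfl

end Comb

section Eigen
variable {d N : ℕ} {q : (Fin d → ℤ) → Fin N → Fin N → ℝ≥0∞} {x : Fin d → ℝ}
  {Cx : Fin N → ℝ} {lx : ℝ}

lemma FmatR_pow (hx : ∀ k j, Fmat q x k j ≠ ⊤) (M : ℕ) (k j : Fin N) :
    ((FmatR q x) ^ M) k j = ((Fmat q x ^ M) k j).toReal := by
  induction M generalizing k j with
  | zero =>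
      by_cases h : k = j <;> simp [Matrix.one_apply, h]
  | succ M ih =>
      rw [pow_succ, pow_succ, Matrix.mul_apply, Matrix.mul_apply,
        ENNReal.toReal_sum (fun l _ => ENNReal.mul_ne_top (Fpow_ne_top hx M k l) (hx l j))]
      exact Finset.sum_congr rfl fun l _ => by rw [ENNReal.toReal_mul, ih]; rfl

lemma mulVec_pow' (A : Matrix (Fin N) (Fin N) ℝ) (heigx : A.mulVec Cx = lx • Cx) (M : ℕ) :
    (A ^ M).mulVec Cx = lx ^ M • Cx := by
  induction M with
  | zero => simp [Matrix.one_mulVec]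
  | succ M ih =>
      rw [pow_succ', ← Matrix.mulVec_mulVec, ih, Matrix.mulVec_smul, heigx, smul_smul,
        pow_succ, mul_comm]

lemma eigen_real (hx : ∀ k j, Fmat q x k j ≠ ⊤)
    (heigx : (FmatR q x).mulVec Cx = lx • Cx) (M : ℕ) (k : Fin N) :
    ∑ j, ((Fmat q x ^ M) k j).toReal * Cx j = lx ^ M * Cx k := by
  have h := congrFun (mulVec_pow' (FmatR q x) heigx M) k
  rw [Matrix.mulVec, dotProduct] at h
  simp only [Pi.smul_apply, smul_eq_mul] at h
  rw [← h]
  exact Finset.sum_congr rfl fun j _ => by rw [FmatR_pow hx]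

lemma lam_pos (hN : 0 < N) (hx : ∀ k j, Fmat q x k j ≠ ⊤)
    (hirr : StronglyIrreducibleKer q) (hC : ∀ k, 0 < Cx k)
    (heigx : (FmatR q x).mulVec Cx = lx • Cx) : 0 < lx := by
  set k₀ : Fin N := ⟨0, hN⟩
  obtain ⟨n₀, hn₀⟩ := hirr 0 k₀ k₀
  have key : ∀ n ≥ n₀, 0 < lx ^ n := by
    intro n hn
    have hpos : 0 < ((Fmat q x ^ n) k₀ k₀).toReal :=
      ENNReal.toReal_pos (Fpow_pos x (hn₀ n hn)).ne' (Fpow_ne_top hx n k₀ k₀)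
    have hsum : ((Fmat q x ^ n) k₀ k₀).toReal * Cx k₀ ≤ lx ^ n * Cx k₀ := by
      rw [← eigen_real hx heigx n k₀]
      exact Finset.single_le_sum (fun j _ => mul_nonneg ENNReal.toReal_nonneg (hC j).le)
        (Finset.mem_univ k₀)
    have := lt_of_lt_of_le (mul_pos hpos (hC k₀)) hsum
    rcases mul_pos_iff.1 this with ⟨h, -⟩ | ⟨-, h⟩
    · exact h
    · exact absurd (hC k₀) (not_lt.2 h.le)
  have h1 := key n₀ le_rfl
  have h2 := key (n₀ + 1) (Nat.le_succ _)
  rw [pow_succ] at h2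
  rcases mul_pos_iff.1 h2 with ⟨-, h⟩ | ⟨h, -⟩
  · exact h
  · exact absurd h1 (not_lt.2 h.le)

lemma eigen_ennreal (hx : ∀ k j, Fmat q x k j ≠ ⊤)
    (heigx : (FmatR q x).mulVec Cx = lx • Cx) (hC : ∀ k, 0 < Cx k) (hl : 0 ≤ lx)
    (M : ℕ) (k : Fin N) :
    ∑ j, (Fmat q x ^ M) k j * ENNReal.ofReal (Cx j)
      = (ENNReal.ofReal lx) ^ M * ENNReal.ofReal (Cx k) := by
  have h := eigen_real hx heigx M k
  have := congrArg ENNReal.ofReal h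
  rw [ENNReal.ofReal_sum_of_nonneg
    (fun j _ => mul_nonneg ENNReal.toReal_nonneg (hC j).le)] at this
  rw [← ENNReal.ofReal_pow hl, ← ENNReal.ofReal_mul (pow_nonneg hl M), ← this]
  exact Finset.sum_congr rfl fun j _ => by
    rw [ENNReal.ofReal_mul ENNReal.toReal_nonneg, ENNReal.ofReal_toReal (Fpow_ne_top hx M k j)]

end Eigen

section RootLimit

lemma pow_root {x : ℝ} (hx : 0 ≤ x) {M : ℕ} (hM : 0 < M) :
    (x ^ M) ^ ((1 : ℝ) / M) = x := by
  rw [← Real.rpow_natCast x M, ← Real.rpow_mul hx]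
  rw [mul_one_div, div_self (by exact_mod_cast hM.ne'), Real.rpow_one]

lemma root_limit {lw G Kc θ : ℝ} (hlw : 0 ≤ lw) (hG : 0 < G) (hKc : 0 < Kc) (hθ0 : 0 ≤ θ)
    {n₀ : ℕ} (hn₀ : 0 < n₀)
    (h : ∀ m : ℕ, lw ^ ((m + 1) * n₀) ≤ θ ^ (m + 1) * Kc * G ^ ((m + 1) * n₀)) :
    lw ≤ θ ^ ((1 : ℝ) / n₀) * G := by
  have key : ∀ m : ℕ, lw ≤ θ ^ ((1 : ℝ) / n₀) * Kc ^ ((1 : ℝ) / ((m + 1) * n₀)) * G := by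
    intro m
    set M := (m + 1) * n₀ with hM
    have hMpos : 0 < M := Nat.mul_pos (Nat.succ_pos m) hn₀
    have h1 : ((lw ^ M) : ℝ) ^ ((1 : ℝ) / M) ≤ (θ ^ (m + 1) * Kc * G ^ M) ^ ((1 : ℝ) / M) :=
      Real.rpow_le_rpow (pow_nonneg hlw M) (h m) (by positivity)
    rw [pow_root hlw hMpos] at h1
    have h2 : (θ ^ (m + 1) * Kc * G ^ M) ^ ((1 : ℝ) / M)
        = θ ^ ((1 : ℝ) / n₀) * Kc ^ ((1 : ℝ) / M) * G := by
      rw [Real.mul_rpow (by positivity) (by positivity),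
        Real.mul_rpow (by positivity) (by positivity), pow_root hG.le hMpos,
        ← Real.rpow_natCast θ (m + 1), ← Real.rpow_mul hθ0]
      congr 3
      rw [hM]
      push_cast
      field_simp
    rw [h2] at h1
    have hcast : ((M : ℕ) : ℝ) = ((m : ℝ) + 1) * n₀ := by rw [hM]; push_cast; ring
    rw [hcast] at h1
    exact h1
  have hf : Filter.Tendsto (fun m : ℕ => ((m + 1) * n₀ : ℝ)) Filter.atTop Filter.atTop := by
    apply Filter.tendsto_atTop_mono (fun m : ℕ => ?_) tendsto_natCast_atTop_atTop
    have : (1 : ℝ) ≤ n₀ := by exact_mod_cast hn₀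
    nlinarith [Nat.cast_nonneg (α := ℝ) m]
  have hinv : Filter.Tendsto (fun m : ℕ => (1 : ℝ) / ((m + 1) * n₀)) Filter.atTop (nhds 0) := by
    have := hf.inv_tendsto_atTop
    simpa only [one_div, Pi.inv_def] using this
  have hKctend : Filter.Tendsto (fun m : ℕ => Kc ^ ((1 : ℝ) / ((m + 1) * n₀)))
      Filter.atTop (nhds 1) := by
    have hcont : ∀ m : ℕ, Kc ^ ((1 : ℝ) / ((m + 1) * n₀))
        = Real.exp (((1 : ℝ) / ((m + 1) * n₀)) * Real.log Kc) := fun m => by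
      rw [Real.rpow_def_of_pos hKc, mul_comm]
    simp only [hcont]
    have h0 : Filter.Tendsto (fun m : ℕ => ((1 : ℝ) / ((m + 1) * n₀)) * Real.log Kc)
        Filter.atTop (nhds 0) := by simpa using hinv.mul_const (Real.log Kc)
    have := (Real.continuous_exp.tendsto 0).comp h0
    simpa [Function.comp_def] using this
  have := ge_of_tendsto' ((hKctend.const_mul (θ ^ ((1 : ℝ) / n₀))).mul_const G) key
  simpa using this

end RootLimit

lemma Fset_convex {d N : ℕ} (q : (Fin d → ℤ) → Fin N → Fin N → ℝ≥0∞) :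
    Convex ℝ {u : Fin d → ℝ | ∀ k j, Fmat q u k j ≠ ⊤} := by
  intro u hu v hv a b ha hb hab
  rcases ha.eq_or_lt with ha0 | ha0
  · have hb1 : b = 1 := by linarith
    simpa [← ha0, hb1] using hv
  rcases hb.eq_or_lt with hb0 | hb0
  · have ha1 : a = 1 := by linarith
    simpa [← hb0, ha1] using hu
  intro k j
  have hb' : (1 : ℝ) - a = b := by linarith
  have hle : Fmat q (a • u + b • v) k j ≤ (Fmat q u k j) ^ a * (Fmat q v k j) ^ b := by
    have h := holder_tsum (ι := Fin d → ℤ) (t := a) ha0 (by linarith)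
      (fun z => q z k j * Stmt3Aux.E u z) (fun z => q z k j * Stmt3Aux.E v z)
    rw [hb'] at h
    calc Fmat q (a • u + b • v) k j
        = ∑' z : Fin d → ℤ, (q z k j * Stmt3Aux.E u z) ^ a * (q z k j * Stmt3Aux.E v z) ^ b :=
          tsum_congr fun z => term_comb ha0.le hb0.le hab _ u v z
      _ ≤ _ := h
  exact fun htop => (ENNReal.mul_ne_top
    (ENNReal.rpow_ne_top_of_nonneg ha0.le (hu k j))
    (ENNReal.rpow_ne_top_of_nonneg hb0.le (hv k j))) (top_le_iff.1 (htop ▸ hle))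

theorem stmt3' {d N : ℕ} (hN : 0 < N) (q : (Fin d → ℤ) → Fin N → Fin N → ℝ≥0∞)
    (hirr : StronglyIrreducibleKer q)
    (lam : (Fin d → ℝ) → ℝ) (C : (Fin d → ℝ) → Fin N → ℝ)
    (𝓕 : Set (Fin d → ℝ))
    (h𝓕 : 𝓕 = interior {u : Fin d → ℝ | ∀ k j, Fmat q u k j ≠ ⊤})
    (heig : ∀ u ∈ 𝓕, (∀ k, 0 < C u k) ∧ (FmatR q u).mulVec (C u) = lam u • C u) :
    StrictConvexOn ℝ 𝓕 lam := by
  have hSconv : Convex ℝ {u : Fin d → ℝ | ∀ k j, Fmat q u k j ≠ ⊤} := Fset_convex q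
  have hFconv : Convex ℝ 𝓕 := by rw [h𝓕]; exact hSconv.interior
  refine ⟨hFconv, ?_⟩
  intro u hu v hv huv a b ha hb hab
  set w := a • u + b • v with hwdef
  have hw𝓕 : w ∈ 𝓕 := hFconv hu hv ha.le hb.le hab
  have hmem : ∀ {x : Fin d → ℝ}, x ∈ 𝓕 → ∀ k j, Fmat q x k j ≠ ⊤ := by
    intro x hx
    rw [h𝓕] at hx
    exact interior_subset hx
  have hu' := hmem hu
  have hv' := hmem hv
  have hw' := hmem hw𝓕
  obtain ⟨hCu, heigu⟩ := heig u hu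
  obtain ⟨hCv, heigv⟩ := heig v hv
  obtain ⟨hCw, heigw⟩ := heig w hw𝓕
  have hlu : 0 < lam u := lam_pos hN hu' hirr hCu heigu
  have hlv : 0 < lam v := lam_pos hN hv' hirr hCv heigv
  have hlw : 0 < lam w := lam_pos hN hw' hirr hCw heigw
  obtain ⟨i, hi⟩ : ∃ i, u i ≠ v i := by
    by_contra hcon; push_neg at hcon; exact huv (funext hcon)
  set zs : Fin d → ℤ := Pi.single i 1 with hzsdef
  have hdzs : dotZ u zs ≠ dotZ v zs := by
    have hcalc : ∀ x : Fin d → ℝ, dotZ x zs = x i := by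
      intro x
      rw [dotZ, Finset.sum_eq_single i]
      · simp [hzsdef]
      · intro j _ hj; simp [hzsdef, Pi.single_apply, hj]
      · simp
    rw [hcalc, hcalc]; exact hi
  have hNE : Nonempty (Fin N) := ⟨⟨0, hN⟩⟩
  set k₀ : Fin N := ⟨0, hN⟩
  choose n1 hn1 using fun p : Fin N × Fin N => hirr 0 p.1 p.2
  choose n2 hn2 using fun p : Fin N × Fin N => hirr zs p.1 p.2
  set n₀ : ℕ := (Finset.univ.sup fun p : Fin N × Fin N => max (n1 p) (n2 p)) + 1 with hn₀def
  have hn₀pos : 0 < n₀ := Nat.succ_pos _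
  have hsup : ∀ p : Fin N × Fin N, max (n1 p) (n2 p) ≤ n₀ := by
    intro p
    rw [hn₀def]
    exact le_trans (Finset.le_sup (f := fun p : Fin N × Fin N => max (n1 p) (n2 p))
      (Finset.mem_univ p)) (Nat.le_succ _)
  have hpos0 : ∀ k j, 0 < convPow q n₀ 0 k j :=
    fun k j => hn1 (k, j) n₀ (le_trans (le_max_left _ _) (hsup (k, j)))
  have hposz : ∀ k j, 0 < convPow q n₀ zs k j :=
    fun k j => hn2 (k, j) n₀ (le_trans (le_max_right _ _) (hsup (k, j)))
  have hstrict : ∀ k j, (Fmat q w ^ n₀) k j < Hmat q u v a b n₀ k j := by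
    intro k j
    have h := Gmat_comb_lt q ha hb hab hu' hv' hdzs (hpos0 k j) (hposz k j)
    rw [Gmat_eq, Gmat_eq, Gmat_eq] at h
    exact h
  have hHfin : ∀ k j, Hmat q u v a b n₀ k j ≠ ⊤ := fun k j => ENNReal.mul_ne_top
    (ENNReal.rpow_ne_top_of_nonneg ha.le (Fpow_ne_top hu' n₀ k j))
    (ENNReal.rpow_ne_top_of_nonneg hb.le (Fpow_ne_top hv' n₀ k j))
  have hHpos : ∀ k j, 0 < Hmat q u v a b n₀ k j := fun k j => ENNReal.mul_pos
    (ENNReal.rpow_pos (Fpow_pos u (hpos0 k j)) (Fpow_ne_top hu' n₀ k j)).ne'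
    (ENNReal.rpow_pos (Fpow_pos v (hpos0 k j)) (Fpow_ne_top hv' n₀ k j)).ne'
  have hnep : (Finset.univ : Finset (Fin N × Fin N)).Nonempty := Finset.univ_nonempty
  set θ : ℝ := Finset.univ.sup' hnep
    (fun p : Fin N × Fin N => ((Fmat q w ^ n₀) p.1 p.2).toReal /
      (Hmat q u v a b n₀ p.1 p.2).toReal) with hθdef
  have hθ1 : θ < 1 := by
    rw [Finset.sup'_lt_iff]
    intro p _
    exact (div_lt_one (ENNReal.toReal_pos (hHpos p.1 p.2).ne' (hHfin p.1 p.2))).2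
      ((ENNReal.toReal_lt_toReal (ne_top_of_lt (hstrict p.1 p.2)) (hHfin p.1 p.2)).2
        (hstrict p.1 p.2))
  have hθ0 : 0 ≤ θ := by
    rw [hθdef]
    exact le_trans (div_nonneg ENNReal.toReal_nonneg ENNReal.toReal_nonneg)
      (Finset.le_sup' (fun p : Fin N × Fin N => ((Fmat q w ^ n₀) p.1 p.2).toReal /
        (Hmat q u v a b n₀ p.1 p.2).toReal) (Finset.mem_univ (k₀, k₀)))
  have hθb : ∀ k j, (Fmat q w ^ n₀) k j ≤ ENNReal.ofReal θ * Hmat q u v a b n₀ k j := by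
    intro k j
    have hr : ((Fmat q w ^ n₀) k j).toReal ≤ θ * (Hmat q u v a b n₀ k j).toReal := by
      rw [← div_le_iff₀ (ENNReal.toReal_pos (hHpos k j).ne' (hHfin k j)), hθdef]
      exact Finset.le_sup' (fun p : Fin N × Fin N => ((Fmat q w ^ n₀) p.1 p.2).toReal /
        (Hmat q u v a b n₀ p.1 p.2).toReal) (Finset.mem_univ (k, j))
    calc (Fmat q w ^ n₀) k j = ENNReal.ofReal (((Fmat q w ^ n₀) k j).toReal) :=
          (ENNReal.ofReal_toReal (ne_top_of_lt (hstrict k j))).symm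
      _ ≤ ENNReal.ofReal (θ * (Hmat q u v a b n₀ k j).toReal) := ENNReal.ofReal_le_ofReal hr
      _ = ENNReal.ofReal θ * Hmat q u v a b n₀ k j := by
          rw [ENNReal.ofReal_mul hθ0, ENNReal.ofReal_toReal (hHfin k j)]
  have hiter := pow_comb_bound q ha hb hab u v n₀ (ENNReal.ofReal θ) hθb
  have hneN : (Finset.univ : Finset (Fin N)).Nonempty := Finset.univ_nonempty
  set Ku : ℝ := Finset.univ.sup' hneN (fun j => C w j / C u j) with hKudef
  set Kv : ℝ := Finset.univ.sup' hneN (fun j => C w j / C v j) with hKvdef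
  have hKu : ∀ j, C w j ≤ Ku * C u j := fun j => by
    have h1 : C w j / C u j ≤ Ku := by
      rw [hKudef]; exact Finset.le_sup' (fun j => C w j / C u j) (Finset.mem_univ j)
    rw [div_le_iff₀ (hCu j)] at h1
    linarith [h1]
  have hKv : ∀ j, C w j ≤ Kv * C v j := fun j => by
    have h1 : C w j / C v j ≤ Kv := by
      rw [hKvdef]; exact Finset.le_sup' (fun j => C w j / C v j) (Finset.mem_univ j)
    rw [div_le_iff₀ (hCv j)] at h1
    linarith [h1]
  have hKu0 : 0 < Ku := by
    rw [hKudef]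
    exact lt_of_lt_of_le (div_pos (hCw k₀) (hCu k₀))
      (Finset.le_sup' (fun j => C w j / C u j) (Finset.mem_univ k₀))
  have hKv0 : 0 < Kv := by
    rw [hKvdef]
    exact lt_of_lt_of_le (div_pos (hCw k₀) (hCv k₀))
      (Finset.le_sup' (fun j => C w j / C v j) (Finset.mem_univ k₀))
  have hb' : (1 : ℝ) - a = b := by linarith
  -- main ENNReal chain
  have main : ∀ m : ℕ,
      (ENNReal.ofReal (lam w)) ^ ((m + 1) * n₀) * ENNReal.ofReal (C w k₀)
        ≤ (ENNReal.ofReal θ) ^ (m + 1) *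
          ((ENNReal.ofReal Ku * ((ENNReal.ofReal (lam u)) ^ ((m + 1) * n₀)
              * ENNReal.ofReal (C u k₀))) ^ a *
           (ENNReal.ofReal Kv * ((ENNReal.ofReal (lam v)) ^ ((m + 1) * n₀)
              * ENNReal.ofReal (C v k₀))) ^ b) := by
    intro m
    set M := (m + 1) * n₀ with hMdef
    have inner : ∀ j, Hmat q u v a b M k₀ j * ENNReal.ofReal (C w j)
        ≤ ((Fmat q u ^ M) k₀ j * ENNReal.ofReal (Ku * C u j)) ^ a *
          ((Fmat q v ^ M) k₀ j * ENNReal.ofReal (Kv * C v j)) ^ b := by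
      intro j
      have hsplitc : ENNReal.ofReal (C w j)
          = ENNReal.ofReal (C w j) ^ a * ENNReal.ofReal (C w j) ^ b := by
        rw [← ENNReal.rpow_add_of_nonneg a b ha.le hb.le, hab, ENNReal.rpow_one]
      calc Hmat q u v a b M k₀ j * ENNReal.ofReal (C w j)
          = (((Fmat q u ^ M) k₀ j) ^ a * ENNReal.ofReal (C w j) ^ a)
            * (((Fmat q v ^ M) k₀ j) ^ b * ENNReal.ofReal (C w j) ^ b) := by
            rw [Hmat]
            show ((Fmat q u ^ M) k₀ j) ^ a * ((Fmat q v ^ M) k₀ j) ^ b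
              * ENNReal.ofReal (C w j) = _
            conv_rhs => rw [← mul_mul_mul_comm, ← hsplitc]
        _ ≤ (((Fmat q u ^ M) k₀ j) ^ a * ENNReal.ofReal (Ku * C u j) ^ a)
            * (((Fmat q v ^ M) k₀ j) ^ b * ENNReal.ofReal (Kv * C v j) ^ b) :=
            mul_le_mul'
              (mul_le_mul_right (ENNReal.rpow_le_rpow
                (ENNReal.ofReal_le_ofReal (hKu j)) ha.le) _)
              (mul_le_mul_right (ENNReal.rpow_le_rpow
                (ENNReal.ofReal_le_ofReal (hKv j)) hb.le) _)
        _ = _ := by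
            rw [← ENNReal.mul_rpow_of_nonneg _ _ ha.le, ← ENNReal.mul_rpow_of_nonneg _ _ hb.le]
    have houter : ∑ j, Hmat q u v a b M k₀ j * ENNReal.ofReal (C w j)
        ≤ (∑ j, (Fmat q u ^ M) k₀ j * ENNReal.ofReal (Ku * C u j)) ^ a *
          (∑ j, (Fmat q v ^ M) k₀ j * ENNReal.ofReal (Kv * C v j)) ^ b := by
      have h := holder_tsum (ι := Fin N) (t := a) ha (by linarith)
        (fun j => (Fmat q u ^ M) k₀ j * ENNReal.ofReal (Ku * C u j))
        (fun j => (Fmat q v ^ M) k₀ j * ENNReal.ofReal (Kv * C v j))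
      rw [hb', tsum_fintype, tsum_fintype, tsum_fintype] at h
      exact le_trans (Finset.sum_le_sum fun j _ => inner j) h
    have hsumu : ∑ j, (Fmat q u ^ M) k₀ j * ENNReal.ofReal (Ku * C u j)
        = ENNReal.ofReal Ku * ((ENNReal.ofReal (lam u)) ^ M * ENNReal.ofReal (C u k₀)) := by
      rw [← eigen_ennreal hu' heigu hCu hlu.le M k₀, Finset.mul_sum]
      refine Finset.sum_congr rfl fun j _ => ?_
      rw [ENNReal.ofReal_mul hKu0.le]; ring
    have hsumv : ∑ j, (Fmat q v ^ M) k₀ j * ENNReal.ofReal (Kv * C v j)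
        = ENNReal.ofReal Kv * ((ENNReal.ofReal (lam v)) ^ M * ENNReal.ofReal (C v k₀)) := by
      rw [← eigen_ennreal hv' heigv hCv hlv.le M k₀, Finset.mul_sum]
      refine Finset.sum_congr rfl fun j _ => ?_
      rw [ENNReal.ofReal_mul hKv0.le]; ring
    calc (ENNReal.ofReal (lam w)) ^ M * ENNReal.ofReal (C w k₀)
        = ∑ j, (Fmat q w ^ M) k₀ j * ENNReal.ofReal (C w j) :=
          (eigen_ennreal hw' heigw hCw hlw.le M k₀).symm
      _ ≤ ∑ j, ((ENNReal.ofReal θ) ^ (m + 1) * Hmat q u v a b M k₀ j)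
            * ENNReal.ofReal (C w j) :=
          Finset.sum_le_sum fun j _ => mul_le_mul_left (hiter m k₀ j) _
      _ = (ENNReal.ofReal θ) ^ (m + 1)
            * ∑ j, Hmat q u v a b M k₀ j * ENNReal.ofReal (C w j) := by
          rw [Finset.mul_sum]
          exact Finset.sum_congr rfl fun j _ => by ring
      _ ≤ (ENNReal.ofReal θ) ^ (m + 1) *
          ((ENNReal.ofReal Ku * ((ENNReal.ofReal (lam u)) ^ M * ENNReal.ofReal (C u k₀))) ^ a *
           (ENNReal.ofReal Kv * ((ENNReal.ofReal (lam v)) ^ M * ENNReal.ofReal (C v k₀))) ^ b) := by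
          refine mul_le_mul_right ?_ _
          rw [← hsumu, ← hsumv]
          exact houter
  -- real version
  have pow_rpow_comm : ∀ {x : ℝ}, 0 ≤ x → ∀ (M : ℕ) (c : ℝ), (x ^ M) ^ c = (x ^ c) ^ M := by
    intro x hx M c
    rw [← Real.rpow_natCast x M, ← Real.rpow_mul hx, mul_comm, Real.rpow_mul hx,
      Real.rpow_natCast]
  have mainR : ∀ m : ℕ, lam w ^ ((m + 1) * n₀) * C w k₀
      ≤ θ ^ (m + 1) * ((Ku * (lam u ^ ((m + 1) * n₀) * C u k₀)) ^ a
        * (Kv * (lam v ^ ((m + 1) * n₀) * C v k₀)) ^ b) := by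
    intro m
    have h := main m
    have hfin1 : ENNReal.ofReal Ku * (ENNReal.ofReal (lam u) ^ ((m + 1) * n₀)
        * ENNReal.ofReal (C u k₀)) ≠ ⊤ :=
      ENNReal.mul_ne_top ENNReal.ofReal_ne_top (ENNReal.mul_ne_top
        (ENNReal.pow_ne_top ENNReal.ofReal_ne_top) ENNReal.ofReal_ne_top)
    have hfin2 : ENNReal.ofReal Kv * (ENNReal.ofReal (lam v) ^ ((m + 1) * n₀)
        * ENNReal.ofReal (C v k₀)) ≠ ⊤ :=
      ENNReal.mul_ne_top ENNReal.ofReal_ne_top (ENNReal.mul_ne_top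
        (ENNReal.pow_ne_top ENNReal.ofReal_ne_top) ENNReal.ofReal_ne_top)
    have hRfin : (ENNReal.ofReal θ) ^ (m + 1) *
          ((ENNReal.ofReal Ku * ((ENNReal.ofReal (lam u)) ^ ((m + 1) * n₀)
              * ENNReal.ofReal (C u k₀))) ^ a *
           (ENNReal.ofReal Kv * ((ENNReal.ofReal (lam v)) ^ ((m + 1) * n₀)
              * ENNReal.ofReal (C v k₀))) ^ b) ≠ ⊤ :=
      ENNReal.mul_ne_top (ENNReal.pow_ne_top ENNReal.ofReal_ne_top)
        (ENNReal.mul_ne_top (ENNReal.rpow_ne_top_of_nonneg ha.le hfin1)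
          (ENNReal.rpow_ne_top_of_nonneg hb.le hfin2))
    have h2 := ENNReal.toReal_mono hRfin h
    simp only [ENNReal.toReal_mul, ENNReal.toReal_pow, ← ENNReal.toReal_rpow,
      ENNReal.toReal_ofReal hlw.le, ENNReal.toReal_ofReal (hCw k₀).le,
      ENNReal.toReal_ofReal hθ0, ENNReal.toReal_ofReal hKu0.le,
      ENNReal.toReal_ofReal hKv0.le, ENNReal.toReal_ofReal hlu.le,
      ENNReal.toReal_ofReal hlv.le, ENNReal.toReal_ofReal (hCu k₀).le,
      ENNReal.toReal_ofReal (hCv k₀).le] at h2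
    exact h2
  set G : ℝ := lam u ^ a * lam v ^ b with hGdef
  have hGpos : 0 < G := mul_pos (Real.rpow_pos_of_pos hlu a) (Real.rpow_pos_of_pos hlv b)
  set Kc' : ℝ := (Ku * C u k₀) ^ a * (Kv * C v k₀) ^ b with hKc'def
  have hKc'pos : 0 < Kc' := mul_pos
    (Real.rpow_pos_of_pos (mul_pos hKu0 (hCu k₀)) a)
    (Real.rpow_pos_of_pos (mul_pos hKv0 (hCv k₀)) b)
  set Kc : ℝ := Kc' / C w k₀ with hKcdef
  have hKcpos : 0 < Kc := div_pos hKc'pos (hCw k₀)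
  have hbound : ∀ m : ℕ, lam w ^ ((m + 1) * n₀) ≤ θ ^ (m + 1) * Kc * G ^ ((m + 1) * n₀) := by
    intro m
    have h := mainR m
    have htrans : (Ku * (lam u ^ ((m + 1) * n₀) * C u k₀)) ^ a
        * (Kv * (lam v ^ ((m + 1) * n₀) * C v k₀)) ^ b
        = Kc' * G ^ ((m + 1) * n₀) := by
      rw [show Ku * (lam u ^ ((m + 1) * n₀) * C u k₀)
          = (Ku * C u k₀) * lam u ^ ((m + 1) * n₀) by ring,
        show Kv * (lam v ^ ((m + 1) * n₀) * C v k₀)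
          = (Kv * C v k₀) * lam v ^ ((m + 1) * n₀) by ring,
        Real.mul_rpow (mul_pos hKu0 (hCu k₀)).le (pow_nonneg hlu.le _),
        Real.mul_rpow (mul_pos hKv0 (hCv k₀)).le (pow_nonneg hlv.le _),
        pow_rpow_comm hlu.le, pow_rpow_comm hlv.le, hKc'def, hGdef, mul_pow]
      ring
    rw [htrans] at h
    rw [← le_div_iff₀ (hCw k₀)] at h
    calc lam w ^ ((m + 1) * n₀) ≤ θ ^ (m + 1) * (Kc' * G ^ ((m + 1) * n₀)) / C w k₀ := h
      _ = θ ^ (m + 1) * Kc * G ^ ((m + 1) * n₀) := by rw [hKcdef]; ring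
  have hroot := root_limit hlw.le hGpos hKcpos hθ0 hn₀pos hbound
  have hθr : θ ^ ((1 : ℝ) / n₀) < 1 :=
    Real.rpow_lt_one hθ0 hθ1 (div_pos one_pos (by exact_mod_cast hn₀pos))
  have hlt : lam w < G := lt_of_le_of_lt hroot (by nlinarith [hGpos, hθr])
  have hgm : G ≤ a * lam u + b * lam v := by
    rw [hGdef]
    exact Real.geom_mean_le_arith_mean2_weighted ha.le hb.le hlu.le hlv.le hab
  show lam w < a • lam u + b • lam v
  simp only [smul_eq_mul]
  linarith

end Stmt3Aux

/-- for a strongly irreducible `ℤ^d`-invariant transition kernel on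
`ℤ^d × {1,…,N}`, the Perron eigenvalue `λ` (any function admitting a positive right eigenvector
`C(u)` of `F(u)` on `𝓕`) is strictly convex on the convex open set
`𝓕 = interior {u : F(u) has finite entries}`. -/
theorem stmt3 {d N : ℕ} (hN : 0 < N) (q : (Fin d → ℤ) → Fin N → Fin N → ℝ≥0∞)
    (hfin : ∀ z k j, q z k j ≠ ⊤)
    (hrow : ∀ k : Fin N, (∑' z : Fin d → ℤ, ∑ j, q z k j) ≠ ⊤)
    (hirr : StronglyIrreducibleKer q)
    (lam : (Fin d → ℝ) → ℝ) (C : (Fin d → ℝ) → Fin N → ℝ)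
    (𝓕 : Set (Fin d → ℝ))
    (h𝓕 : 𝓕 = interior {u : Fin d → ℝ | ∀ k j, Fmat q u k j ≠ ⊤})
    (heig : ∀ u ∈ 𝓕, (∀ k, 0 < C u k) ∧ (FmatR q u).mulVec (C u) = lam u • C u) :
    StrictConvexOn ℝ 𝓕 lam :=
  Stmt3Aux.stmt3' hN q hirr lam C 𝓕 h𝓕 heig
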